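/- (Convergence and uniform bound for the Eisenstein series.) Let s ∈ ℝ with s > 1, and let z ∈ ℍ satisfy im z < 1 and im(δ·z) ≤ 1 for every δ ∈ Γ. Assume there exists U > 0 such that for every t ≥ 0 the set A(z,t) is finite with Π(z,t) ≤ U·e^t. Then the function q ↦ (im(δ·z))^s on Γ∞\Γ (δ any representative of q) is summable, and E(z,s) ≤ e·U·s/(s−1). -/

import Mathlib

/-!
Write `a_q = -log (im (δ_q z)) ≥ 0`, so that the terms of `E(z,s)` are `exp (-s a_q)`.
Translating `δ_q` by a power of `T` moves `δ_q z` into the strip `|re| ≤ 1/2` without changing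
its imaginary part, and there `dist (i, δ_q z) ≤ 1/2 + a_q` (move horizontally at height `1`,
then vertically). Hence `#{q | a_q < t} ≤ Π(z, t + 1) ≤ e U e^t`. Writing
`exp (-s a) = ∫_a^∞ s e^{-st} dt` and exchanging sum and integral (layer cake),
`E(z,s) = ∫_0^∞ s e^{-st} #{q | a_q < t} dt ≤ e U s ∫_0^∞ e^{-(s-1)t} dt`,
which is `e U s / (s - 1)`.
-/

open scoped UpperHalfPlane MatrixGroups
open UpperHalfPlane

noncomputable section

/-- The parabolic element `T = [[1,1],[0,1]]` of `SL(2,ℝ)`, acting on `ℍ` by `z ↦ z + 1`. -/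
def T : SL(2, ℝ) := ⟨!![1, 1; 0, 1], by norm_num [Matrix.det_fin_two_of]⟩

/-- The horocycle segment `h ⊆ ℍ`: points with `-1/2 ≤ re < 1/2` and `im = 1`. -/
def horocycle : Set ℍ := {w : ℍ | -(1 / 2) ≤ w.re ∧ w.re < 1 / 2 ∧ w.im = 1}

variable (Γ : Subgroup SL(2, ℝ))

/-- The cyclic subgroup `Γ∞` of `Γ` generated by `T`. -/
abbrev GammaInf (hT : T ∈ Γ) : Subgroup Γ := Subgroup.zpowers ⟨T, hT⟩

/-- The set of right cosets `Γ∞\Γ`. -/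
abbrev Cosets (hT : T ∈ Γ) := Quotient (QuotientGroup.rightRel (GammaInf Γ hT))

variable (hT : T ∈ Γ)

/-- The term `(im (δ·z))^s` of the Eisenstein series attached to a coset `q ∈ Γ∞\Γ`
(`δ` a representative of `q`; the value is independent of the representative). -/
def eisTerm (z : ℍ) (s : ℝ) (q : Cosets Γ hT) : ℝ :=
  (((Quotient.out q : Γ) : SL(2, ℝ)) • z).im ^ s

/-- The Eisenstein series `E(z,s) = ∑'_{q ∈ Γ∞\Γ} (im (δ·z))^s`. -/
def Eis (z : ℍ) (s : ℝ) : ℝ := ∑' q : Cosets Γ hT, eisTerm Γ hT z s q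

/-- `A(z,t)`: the set of cosets `q ∈ Γ∞\Γ` admitting a representative `δ` with
`dist(i, δ·z) ≤ t`. -/
def Aset (z : ℍ) (t : ℝ) : Set (Cosets Γ hT) :=
  {q | ∃ δ : Γ, Quotient.mk (QuotientGroup.rightRel (GammaInf Γ hT)) δ = q ∧
    dist UpperHalfPlane.I ((δ : SL(2, ℝ)) • z) ≤ t}

/-- `A(h,z,t)`: the set of cosets `q ∈ Γ∞\Γ` admitting a representative `δ` with
`-1/2 ≤ re(δ·z) < 1/2` and `infDist (δ·z) h ≤ t`. -/
def Ahset (z : ℍ) (t : ℝ) : Set (Cosets Γ hT) :=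
  {q | ∃ δ : Γ, Quotient.mk (QuotientGroup.rightRel (GammaInf Γ hT)) δ = q ∧
    -(1 / 2) ≤ ((δ : SL(2, ℝ)) • z).re ∧ ((δ : SL(2, ℝ)) • z).re < 1 / 2 ∧
    Metric.infDist ((δ : SL(2, ℝ)) • z) horocycle ≤ t}

open Real Set MeasureTheory
open scoped ENNReal

section LayerCake

variable {ι : Type*}

lemma lintegral_Ioi_mul_exp_neg_mul {b : ℝ} (hb : 0 < b) (c : ℝ) :
    ∫⁻ t in Ioi c, ENNReal.ofReal (b * exp (-b * t)) = ENNReal.ofReal (exp (-b * c)) := by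
  have hb' : -b < 0 := neg_lt_zero.2 hb
  rw [← ofReal_integral_eq_lintegral_ofReal ((integrableOn_exp_mul_Ioi hb' c).const_mul b)
    (ae_of_all _ fun t => by positivity), integral_const_mul, integral_exp_mul_Ioi hb']
  congr 1
  field_simp

lemma tsum_indicator_Ioi_eq_encard_mul (a : ι → ℝ) (g : ℝ → ℝ≥0∞) (t : ℝ) :
    ∑' i, (Ioi (a i)).indicator g t = {i | a i < t}.encard * g t := by
  rw [← ENNReal.tsum_set_const, tsum_subtype {i | a i < t} fun _ => g t]
  congr 1 with i

lemma summable_and_tsum_le_of_tsum_ofReal_le {f : ι → ℝ} (hf : ∀ i, 0 ≤ f i) {c : ℝ}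
    (hc : 0 ≤ c) (h : ∑' i, ENNReal.ofReal (f i) ≤ ENNReal.ofReal c) :
    Summable f ∧ ∑' i, f i ≤ c := by
  have hsum : Summable f :=
    (ENNReal.summable_toReal (ne_top_of_le_ne_top ENNReal.ofReal_ne_top h)).congr
      fun i => ENNReal.toReal_ofReal (hf i)
  refine ⟨hsum, ?_⟩
  rwa [← ENNReal.ofReal_tsum_of_nonneg hf hsum, ENNReal.ofReal_le_ofReal_iff hc] at h

variable {a : ι → ℝ} {K s : ℝ}

lemma countable_of_finite_sublevel (hfin : ∀ t, 0 < t → {i | a i < t}.Finite) :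
    Countable ι := by
  have : (univ : Set ι) = ⋃ n : ℕ, {i | a i < n + 1} :=
    (eq_univ_of_forall fun i =>
      mem_iUnion.2 ((exists_nat_gt (a i)).imp fun _ h => h.trans (lt_add_one _))).symm
  exact countable_univ_iff.1 (this ▸ countable_iUnion fun n => (hfin _ (by positivity)).countable)

theorem tsum_ofReal_exp_neg_mul_le (ha : ∀ i, 0 ≤ a i) (hs : 1 < s)
    (hcount : ∀ t, 0 < t → {i | a i < t}.Finite ∧ ({i | a i < t}.ncard : ℝ) ≤ K * exp t) :
    ∑' i, ENNReal.ofReal (exp (-s * a i)) ≤ ENNReal.ofReal (K * s / (s - 1)) := by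
  have := countable_of_finite_sublevel fun t ht => (hcount t ht).1
  have hs0 : 0 < s := by linarith
  have hs1 : 0 < s - 1 := by linarith
  set g : ℝ → ℝ≥0∞ := fun t => ENNReal.ofReal (s * exp (-s * t))
  have hbound : ∀ t, 0 < t →
      {i | a i < t}.encard * g t
        ≤ ENNReal.ofReal (K * s / (s - 1)) * ENNReal.ofReal ((s - 1) * exp (-(s - 1) * t)) := by
    intro t ht
    obtain ⟨hfin, hcard⟩ := hcount t ht
    have hK : 0 ≤ K * exp t := (Nat.cast_nonneg _).trans hcard
    rw [← hfin.cast_ncard_eq, ← ENNReal.ofReal_mul' (by positivity)]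
    calc (({i | a i < t}.ncard : ℕ∞) : ℝ≥0∞) * g t
        ≤ ENNReal.ofReal (K * exp t) * g t := by
          gcongr
          simpa using ENNReal.ofReal_le_ofReal hcard
      _ = _ := by
        rw [← ENNReal.ofReal_mul hK]
        congr 1
        field_simp
        rw [mul_assoc, ← exp_add]
        ring_nf
  calc ∑' i, ENNReal.ofReal (exp (-s * a i))
      = ∑' i, ∫⁻ t in Ioi 0, (Ioi (a i)).indicator g t := by
        congr 1 with i
        rw [lintegral_indicator measurableSet_Ioi, Measure.restrict_restrict measurableSet_Ioi,
          Ioi_inter_Ioi, max_eq_left (ha i), lintegral_Ioi_mul_exp_neg_mul hs0]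
    _ = ∫⁻ t in Ioi 0, {i | a i < t}.encard * g t := by
        rw [← lintegral_tsum fun i => ((by fun_prop : Measurable g).indicator
          measurableSet_Ioi).aemeasurable]
        simp_rw [tsum_indicator_Ioi_eq_encard_mul]
    _ ≤ ∫⁻ t in Ioi 0, ENNReal.ofReal (K * s / (s - 1))
          * ENNReal.ofReal ((s - 1) * exp (-(s - 1) * t)) :=
        setLIntegral_mono (by fun_prop) hbound
    _ = ENNReal.ofReal (K * s / (s - 1)) := by
        rw [lintegral_const_mul _ (by fun_prop), lintegral_Ioi_mul_exp_neg_mul hs1]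
        simp

theorem summable_exp_neg_mul_and_tsum_le (ha : ∀ i, 0 ≤ a i) (hs : 1 < s)
    (hcount : ∀ t, 0 < t → {i | a i < t}.Finite ∧ ({i | a i < t}.ncard : ℝ) ≤ K * exp t) :
    Summable (fun i => exp (-s * a i)) ∧ ∑' i, exp (-s * a i) ≤ K * s / (s - 1) := by
  have hK : 0 ≤ K :=
    nonneg_of_mul_nonneg_left ((Nat.cast_nonneg _).trans (hcount 1 one_pos).2) (exp_pos 1)
  exact summable_and_tsum_le_of_tsum_ofReal_le (fun i => (exp_pos _).le)
    (div_nonneg (mul_nonneg hK (by linarith)) (by linarith))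
    (tsum_ofReal_exp_neg_mul_le ha hs hcount)

end LayerCake

lemma T_eq_map : T = Matrix.SpecialLinearGroup.map (Int.castRingHom ℝ) ModularGroup.T := by
  ext i j
  fin_cases i <;> fin_cases j <;>
    simp [T, Matrix.SpecialLinearGroup.map_apply_coe, ModularGroup.coe_T]

lemma T_zpow_smul (n : ℤ) (w : ℍ) : (T ^ n) • w = (n : ℝ) +ᵥ w := by
  rw [T_eq_map, ← map_zpow]
  exact modular_T_zpow_smul w n

lemma dist_I_le_half_add_abs_log_im (w : ℍ) (hw : |w.re| ≤ 1 / 2) :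
    dist I w ≤ 1 / 2 + |log w.im| := by
  have horizontal : dist I (w.re +ᵥ I) ≤ 1 / 2 := by
    rw [dist_le_iff_le_sinh]
    have : dist (I : ℂ) ((w.re +ᵥ I : ℍ) : ℂ) = |w.re| := by
      simp [coe_vadd]
    rw [this, I_im, vadd_im, I_im, mul_one, Real.sqrt_one]
    calc |w.re| / (2 * 1) ≤ 1 / 2 / 2 := by linarith
      _ ≤ sinh (1 / 2 / 2) := self_le_sinh_iff.2 (by norm_num)
  have vertical : dist (w.re +ᵥ I) w = |log w.im| := by
    rw [dist_of_re_eq (by simp), vadd_im, I_im, log_one, Real.dist_eq, zero_sub, abs_neg]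
  linarith [dist_triangle I (w.re +ᵥ I) w]

lemma exists_mk_eq_im_eq_abs_re_le (z : ℍ) (q : Cosets Γ hT) :
    ∃ δ : Γ, Quotient.mk (QuotientGroup.rightRel (GammaInf Γ hT)) δ = q ∧
      ((δ : SL(2, ℝ)) • z).im = ((q.out : SL(2, ℝ)) • z).im ∧
      |((δ : SL(2, ℝ)) • z).re| ≤ 1 / 2 := by
  set w : ℍ := (q.out : SL(2, ℝ)) • z
  set n : ℤ := -round w.re
  refine ⟨⟨T, hT⟩ ^ n * q.out, ?_, ?_⟩
  · conv_rhs => rw [← Quotient.out_eq q]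
    exact Quotient.sound
      (QuotientGroup.rightRel_apply.2 (Subgroup.mem_zpowers_iff.2 ⟨-n, by group⟩))
  · have hsmul : (((⟨T, hT⟩ ^ n * q.out : Γ) : SL(2, ℝ)) • z) = (n : ℝ) +ᵥ w := by
      rw [Subgroup.coe_mul, Subgroup.coe_zpow, mul_smul, T_zpow_smul]
    rw [hsmul, vadd_im, vadd_re]
    refine ⟨rfl, ?_⟩
    simpa [n, add_comm, ← sub_eq_add_neg] using abs_sub_round w.re

lemma Aset_mono (z : ℍ) {t t' : ℝ} (h : t ≤ t') : Aset Γ hT z t ⊆ Aset Γ hT z t' :=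
  fun _ ⟨δ, hδ, hdist⟩ => ⟨δ, hδ, hdist.trans h⟩

lemma mem_Aset_half_add_abs_log_im (z : ℍ) (q : Cosets Γ hT) :
    q ∈ Aset Γ hT z (1 / 2 + |log ((q.out : SL(2, ℝ)) • z).im|) := by
  obtain ⟨δ, hδ, him, hre⟩ := exists_mk_eq_im_eq_abs_re_le Γ hT z q
  exact ⟨δ, hδ, him ▸ dist_I_le_half_add_abs_log_im _ hre⟩

theorem eisenstein_summable_and_bounded (s : ℝ) (hs : 1 < s) (z : ℍ)
    (hzΓ : ∀ δ : Γ, ((δ : SL(2, ℝ)) • z).im ≤ 1)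
    (U : ℝ)
    (hPi : ∀ t : ℝ, 0 ≤ t →
      (Aset Γ hT z t).Finite ∧ ((Aset Γ hT z t).ncard : ℝ) ≤ U * Real.exp t) :
    Summable (eisTerm Γ hT z s) ∧ Eis Γ hT z s ≤ Real.exp 1 * U * s / (s - 1) := by
  set y : Cosets Γ hT → ℝ := fun q => ((q.out : SL(2, ℝ)) • z).im
  set a : Cosets Γ hT → ℝ := fun q => -log (y q)
  have ha : ∀ q, 0 ≤ a q := fun q => neg_nonneg.2 (log_nonpos (im_pos _).le (hzΓ _))
  have hterm : eisTerm Γ hT z s = fun q => exp (-s * a q) := by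
    ext q
    show y q ^ s = exp (-s * -log (y q))
    rw [rpow_def_of_pos (im_pos _), neg_mul_neg, mul_comm]
  have hsub : ∀ t, {q | a q < t} ⊆ Aset Γ hT z (t + 1) := fun t q hq => by
    have habs : |log (y q)| = a q := abs_of_nonpos (neg_nonneg.1 (ha q))
    refine Aset_mono Γ hT z ?_ (mem_Aset_half_add_abs_log_im Γ hT z q)
    linarith [hq.out]
  have hcount : ∀ t, 0 < t → {q | a q < t}.Finite ∧
      ({q | a q < t}.ncard : ℝ) ≤ exp 1 * U * exp t := fun t ht => by
    obtain ⟨hfin, hcard⟩ := hPi (t + 1) (by linarith)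
    refine ⟨hfin.subset (hsub t), ?_⟩
    calc ({q | a q < t}.ncard : ℝ) ≤ (Aset Γ hT z (t + 1)).ncard := by
          exact_mod_cast Set.ncard_le_ncard (hsub t) hfin
      _ ≤ U * exp (t + 1) := hcard
      _ = exp 1 * U * exp t := by rw [exp_add]; ring
  rw [Eis, hterm]
  exact summable_exp_neg_mul_and_tsum_le ha hs hcount
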